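/- arXiv:1407.1603 — 2 statements merged into one kernel-verified Lean document; each statement's English description precedes it below -/
import Mathlib

section
/- Let d ≥ 3, let −2 < λ < 0, and let k ≥ 1 be an integer. Then (−1)^k ∫_{−1}^{1} (1−t)^{−λ/2} (d^k/dt^k)[(1−t²)^{k+(d−3)/2}] dt < 0. Consequently, by the Rodrigues formula (1−t²)^{(d−3)/2} P_{k,d}(t) = (−1)^k R_{k,d} (d^k/dt^k)(1−t²)^{k+(d−3)/2} with R_{k,d} = Γ((d−1)/2)/(2^k Γ(k+(d−1)/2)) > 0, the quantity I_k(d,λ) = |S^{d−2}| ∫_{−1}^{1} (1−t)^{−λ/2} P_{k,d}(t) (1−t²)^{(d−3)/2} dt is strictly negative. -/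
open MeasureTheory Metric Set
open scoped ENNReal

/-- The surface measure `|S^{n-1}|` of the unit sphere in `ℝ^n`. -/
noncomputable def sphereArea (n : ℕ) : ℝ :=
  (((volume : Measure (EuclideanSpace ℝ (Fin n))).toSphere) Set.univ).toReal

/-!
Integrating by parts `k` times moves all derivatives from `(1 - t²)^β` onto `(1 - t)^α`,
with `α = -λ/2 ∈ (0, 1)` and `β = k + (d - 3)/2 ≥ k`. The boundary terms vanish because every
`m`-th derivative of `(1 - t²)^β` with `m < k` still carries a factor `(1 - t²)^(β - m)`, and
the `k`-th derivative of `(1 - t)^α` is `(-α)(1 - α)⋯(k - 1 - α) (1 - t)^(α - k)`. Hence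
`(-1)^k ∫ (1 - t)^α ∂^k(1 - t²)^β` equals the rising factorial
`(-α)(1 - α)⋯(k - 1 - α) < 0` times the positive integral `∫ (1 - t)^(α - k) (1 - t²)^β`.
-/

open Polynomial

theorem ascPochhammer_eval_neg_of_neg_one_lt_of_neg {S : Type*} [CommRing S] [PartialOrder S]
    [IsStrictOrderedRing S] {s : S} (hs₁ : -1 < s) (hs₂ : s < 0) {n : ℕ} (hn : n ≠ 0) :
    (ascPochhammer S n).eval s < 0 := by
  obtain ⟨m, rfl⟩ := Nat.exists_eq_succ_of_ne_zero hn
  rw [ascPochhammer_succ_left, eval_mul, eval_X, eval_comp, eval_add, eval_X, eval_one]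
  exact mul_neg_of_neg_of_pos hs₂ (ascPochhammer_pos m (s + 1) (neg_lt_iff_pos_add.1 hs₁))

theorem integral_mul_deriv_eq_neg_integral_deriv_mul_of_mul_eq_zero {u u' v v' : ℝ → ℝ}
    {a b : ℝ} (hab : a ≤ b) (huv : ContinuousOn (fun t => u t * v t) (Icc a b))
    (hu : ∀ t ∈ Ioo a b, HasDerivAt u (u' t) t) (hv : ∀ t ∈ Ioo a b, HasDerivAt v (v' t) t)
    (hu'v : IntervalIntegrable (fun t => u' t * v t) volume a b)
    (huv' : IntervalIntegrable (fun t => u t * v' t) volume a b)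
    (ha : u a * v a = 0) (hb : u b * v b = 0) :
    ∫ t in a..b, u t * v' t = -∫ t in a..b, u' t * v t := by
  have hftc := intervalIntegral.integral_eq_sub_of_hasDerivAt_of_le hab huv
    (fun t ht => (hu t ht).mul (hv t ht)) (hu'v.add huv')
  rw [intervalIntegral.integral_add hu'v huv', ha, hb] at hftc
  linarith

noncomputable def oneSubRpowDeriv (α : ℝ) (j : ℕ) (t : ℝ) : ℝ :=
  (ascPochhammer ℝ j).eval (-α) * (1 - t) ^ (α - j)

theorem oneSubRpowDeriv_zero (α t : ℝ) : oneSubRpowDeriv α 0 t = (1 - t) ^ α := by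
  simp [oneSubRpowDeriv]

theorem hasDerivAt_oneSubRpowDeriv (α : ℝ) (j : ℕ) {t : ℝ} (ht : t < 1) :
    HasDerivAt (oneSubRpowDeriv α j) (oneSubRpowDeriv α (j + 1) t) t := by
  have hbase : HasDerivAt (fun s : ℝ => (1 - s) ^ (α - j))
      ((α - j) * (1 - t) ^ (α - j - 1) * -1) t :=
    (Real.hasDerivAt_rpow_const (Or.inl (sub_pos.2 ht).ne')).comp t
      ((hasDerivAt_id t).const_sub 1)
  refine (hbase.const_mul ((ascPochhammer ℝ j).eval (-α))).congr_deriv ?_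
  rw [oneSubRpowDeriv, ascPochhammer_succ_eval, Nat.cast_succ, ← sub_sub]
  ring

/-- From `((1 - t²)^(β - m) P)' = (1 - t²)^(β - m - 1) (-2 (β - m) t P + (1 - t²) P')`. -/
noncomputable def oneSubSqRpowPoly (β : ℝ) : ℕ → ℝ[X]
  | 0 => 1
  | m + 1 => C (-2 * (β - m)) * X * oneSubSqRpowPoly β m
      + (1 - X ^ 2) * derivative (oneSubSqRpowPoly β m)

noncomputable def oneSubSqRpowDeriv (β : ℝ) (m : ℕ) (t : ℝ) : ℝ :=
  (1 - t ^ 2) ^ (β - m) * (oneSubSqRpowPoly β m).eval t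

theorem hasDerivAt_oneSubSqRpowDeriv (β : ℝ) (m : ℕ) {t : ℝ} (ht : t ∈ Ioo (-1 : ℝ) 1) :
    HasDerivAt (oneSubSqRpowDeriv β m) (oneSubSqRpowDeriv β (m + 1) t) t := by
  have hpos : 0 < 1 - t ^ 2 := by nlinarith [ht.1, ht.2]
  have hbase : HasDerivAt (fun s : ℝ => (1 - s ^ 2) ^ (β - m))
      ((β - m) * (1 - t ^ 2) ^ (β - m - 1) * -(2 * t)) t := by
    convert ((hasDerivAt_pow 2 t).const_sub 1).rpow_const (p := β - m) (Or.inl hpos.ne')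
      using 1
    simp only [Nat.cast_ofNat]
    ring
  refine (hbase.mul ((oneSubSqRpowPoly β m).hasDerivAt t)).congr_deriv ?_
  have hsplit : (1 - t ^ 2) ^ (β - m) = (1 - t ^ 2) ^ (β - m - 1) * (1 - t ^ 2) := by
    rw [← Real.rpow_add_one hpos.ne', sub_add_cancel]
  simp only [oneSubSqRpowDeriv, oneSubSqRpowPoly, eval_add, eval_mul, eval_C, eval_X, eval_sub,
    eval_pow, eval_one, Nat.cast_succ, ← sub_sub, hsplit]
  ring

theorem iteratedDeriv_one_sub_sq_rpow_eqOn (β : ℝ) (m : ℕ) :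
    EqOn (iteratedDeriv m fun s : ℝ => (1 - s ^ 2) ^ β) (oneSubSqRpowDeriv β m)
      (Ioo (-1) 1) := by
  induction m with
  | zero => intro t _; simp [oneSubSqRpowDeriv, oneSubSqRpowPoly]
  | succ m ih =>
    intro t ht
    rw [iteratedDeriv_succ, (ih.eventuallyEq_of_mem (isOpen_Ioo.mem_nhds ht)).deriv_eq,
      (hasDerivAt_oneSubSqRpowDeriv β m ht).deriv]

theorem one_sub_rpow_mul_one_sub_sq_rpow {a b t : ℝ} (hab : a + b ≠ 0)
    (ht : t ∈ Icc (-1 : ℝ) 1) :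
    (1 - t) ^ a * (1 - t ^ 2) ^ b = (1 - t) ^ (a + b) * (1 + t) ^ b := by
  have h₁ : 0 ≤ 1 - t := by linarith [ht.2]
  have h₂ : 0 ≤ 1 + t := by linarith [ht.1]
  rw [show 1 - t ^ 2 = (1 - t) * (1 + t) by ring, Real.mul_rpow h₁ h₂, Real.rpow_add' h₁ hab]
  ring

theorem continuousOn_one_sub_rpow_mul_one_sub_sq_rpow {a b : ℝ} (hb : 0 ≤ b) (hab : 0 < a + b) :
    ContinuousOn (fun t : ℝ => (1 - t) ^ a * (1 - t ^ 2) ^ b) (Icc (-1) 1) := by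
  refine ContinuousOn.congr ?_ fun t ht => one_sub_rpow_mul_one_sub_sq_rpow hab.ne' ht
  exact (((continuous_const.sub continuous_id).rpow_const fun _ => Or.inr hab.le).mul
    ((continuous_const.add continuous_id).rpow_const fun _ => Or.inr hb)).continuousOn

theorem one_sub_rpow_mul_one_sub_sq_rpow_eq_zero {a b t : ℝ} (hb : 0 < b) (hab : 0 < a + b)
    (ht : t = -1 ∨ t = 1) : (1 - t) ^ a * (1 - t ^ 2) ^ b = 0 := by
  rw [one_sub_rpow_mul_one_sub_sq_rpow hab.ne' (by rcases ht with rfl | rfl <;> norm_num)]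
  rcases ht with rfl | rfl <;> norm_num [Real.zero_rpow hb.ne', Real.zero_rpow hab.ne']

theorem oneSubRpowDeriv_mul_oneSubSqRpowDeriv (α β : ℝ) (j m : ℕ) (t : ℝ) :
    oneSubRpowDeriv α j t * oneSubSqRpowDeriv β m t =
      (ascPochhammer ℝ j).eval (-α) *
        ((1 - t) ^ (α - j) * (1 - t ^ 2) ^ (β - m) * (oneSubSqRpowPoly β m).eval t) := by
  rw [oneSubRpowDeriv, oneSubSqRpowDeriv]
  ring

section Product

variable {α β : ℝ} {j m : ℕ}

theorem continuousOn_oneSubRpowDeriv_mul_oneSubSqRpowDeriv (hm : m ≤ β)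
    (hjm : 0 < α - j + (β - m)) :
    ContinuousOn (fun t => oneSubRpowDeriv α j t * oneSubSqRpowDeriv β m t) (Icc (-1) 1) := by
  simp_rw [oneSubRpowDeriv_mul_oneSubSqRpowDeriv]
  exact continuousOn_const.mul ((continuousOn_one_sub_rpow_mul_one_sub_sq_rpow
    (sub_nonneg.2 hm) hjm).mul (oneSubSqRpowPoly β m).continuous.continuousOn)

theorem intervalIntegrable_oneSubRpowDeriv_mul_oneSubSqRpowDeriv (hm : m ≤ β)
    (hjm : 0 < α - j + (β - m)) :
    IntervalIntegrable (fun t => oneSubRpowDeriv α j t * oneSubSqRpowDeriv β m t) volume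
      (-1) 1 :=
  (continuousOn_oneSubRpowDeriv_mul_oneSubSqRpowDeriv hm hjm).intervalIntegrable_of_Icc
    (by norm_num)

theorem oneSubRpowDeriv_mul_oneSubSqRpowDeriv_eq_zero (hm : m < β)
    (hjm : 0 < α - j + (β - m)) {t : ℝ} (ht : t = -1 ∨ t = 1) :
    oneSubRpowDeriv α j t * oneSubSqRpowDeriv β m t = 0 := by
  rw [oneSubRpowDeriv_mul_oneSubSqRpowDeriv,
    one_sub_rpow_mul_one_sub_sq_rpow_eq_zero (sub_pos.2 hm) hjm ht]
  simp

/-- The exponent of `1 - t` in each product is at least `α + β - k > 0`, so the boundary terms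
vanish. -/
theorem integral_oneSubRpowDeriv_mul_oneSubSqRpowDeriv_succ (hα : 0 < α) {k : ℕ}
    (hβ : (k : ℝ) ≤ β) (hjm : j + m + 1 = k) :
    ∫ t in (-1 : ℝ)..1, oneSubRpowDeriv α j t * oneSubSqRpowDeriv β (m + 1) t =
      -∫ t in (-1 : ℝ)..1, oneSubRpowDeriv α (j + 1) t * oneSubSqRpowDeriv β m t := by
  have hk : (j : ℝ) + m + 1 = k := by exact_mod_cast hjm
  have hm : (m : ℝ) < β := by linarith [(j.cast_nonneg : (0 : ℝ) ≤ j)]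
  have hpos : 0 < α - j + (β - m) := by linarith
  refine integral_mul_deriv_eq_neg_integral_deriv_mul_of_mul_eq_zero (by norm_num)
    (continuousOn_oneSubRpowDeriv_mul_oneSubSqRpowDeriv hm.le hpos)
    (fun t ht => hasDerivAt_oneSubRpowDeriv α j ht.2)
    (fun t ht => hasDerivAt_oneSubSqRpowDeriv β m ht)
    (intervalIntegrable_oneSubRpowDeriv_mul_oneSubSqRpowDeriv hm.le (by push_cast; linarith))
    (intervalIntegrable_oneSubRpowDeriv_mul_oneSubSqRpowDeriv (by push_cast; linarith)
      (by push_cast; linarith))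
    (oneSubRpowDeriv_mul_oneSubSqRpowDeriv_eq_zero hm hpos (Or.inl rfl))
    (oneSubRpowDeriv_mul_oneSubSqRpowDeriv_eq_zero hm hpos (Or.inr rfl))

theorem integral_one_sub_rpow_mul_oneSubSqRpowDeriv_eq (hα : 0 < α) {k : ℕ}
    (hβ : (k : ℝ) ≤ β) (hjm : j + m = k) :
    ∫ t in (-1 : ℝ)..1, (1 - t) ^ α * oneSubSqRpowDeriv β k t =
      (-1) ^ j * ∫ t in (-1 : ℝ)..1, oneSubRpowDeriv α j t * oneSubSqRpowDeriv β m t := by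
  induction j generalizing m with
  | zero => subst hjm; simp [oneSubRpowDeriv_zero]
  | succ j ih =>
    rw [ih (m := m + 1) (by omega),
      integral_oneSubRpowDeriv_mul_oneSubSqRpowDeriv_succ hα hβ (by omega), pow_succ]
    ring

end Product

theorem neg_one_pow_mul_integral_one_sub_rpow_mul_iteratedDeriv_neg {α β : ℝ} (hα₀ : 0 < α)
    (hα₁ : α < 1) {k : ℕ} (hk : k ≠ 0) (hβ : (k : ℝ) ≤ β) :
    (-1) ^ k * ∫ t in (-1 : ℝ)..1,
      (1 - t) ^ α * iteratedDeriv k (fun s : ℝ => (1 - s ^ 2) ^ β) t < 0 := by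
  have hae : ∀ᵐ t, t ∈ uIoc (-1 : ℝ) 1 →
      (1 - t) ^ α * iteratedDeriv k (fun s : ℝ => (1 - s ^ 2) ^ β) t =
        (1 - t) ^ α * oneSubSqRpowDeriv β k t := by
    filter_upwards [Measure.ae_ne volume (1 : ℝ)] with t ht₁ ht
    rw [uIoc_of_le (by norm_num)] at ht
    rw [iteratedDeriv_one_sub_sq_rpow_eqOn β k ⟨ht.1, lt_of_le_of_ne ht.2 ht₁⟩]
  have hJ : 0 < ∫ t in (-1 : ℝ)..1, (1 - t) ^ (α - k) * (1 - t ^ 2) ^ β := by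
    refine intervalIntegral.intervalIntegral_pos_of_pos_on
      ((continuousOn_one_sub_rpow_mul_one_sub_sq_rpow (by linarith [k.cast_nonneg (α := ℝ)])
        (by linarith)).intervalIntegrable_of_Icc (by norm_num)) (fun t ht => ?_) (by norm_num)
    have h₁ : 0 < 1 - t := by linarith [ht.2]
    have h₂ : 0 < 1 - t ^ 2 := by nlinarith [ht.1, ht.2]
    positivity
  have hc : (ascPochhammer ℝ k).eval (-α) < 0 :=
    ascPochhammer_eval_neg_of_neg_one_lt_of_neg (by linarith) (by linarith) hk
  rw [intervalIntegral.integral_congr_ae hae,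
    integral_one_sub_rpow_mul_oneSubSqRpowDeriv_eq hα₀ hβ (add_zero k)]
  simp_rw [oneSubRpowDeriv_mul_oneSubSqRpowDeriv, oneSubSqRpowPoly, eval_one, mul_one,
    CharP.cast_eq_zero, sub_zero, intervalIntegral.integral_const_mul, ← mul_assoc, ← pow_add,
    Even.neg_one_pow ⟨k, rfl⟩, one_mul]
  exact mul_neg_of_neg_of_pos hc hJ

theorem sphereArea_pos {n : ℕ} (hn : n ≠ 0) : 0 < sphereArea n := by
  rw [sphereArea, Measure.toSphere_apply_univ, finrank_euclideanSpace_fin]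
  refine ENNReal.toReal_pos (mul_ne_zero (by exact_mod_cast hn)
    (measure_ball_pos _ _ one_pos).ne') ?_
  exact (ENNReal.mul_lt_top (ENNReal.natCast_lt_top _) measure_ball_lt_top).ne

/-- negativity of `(−1)^k ∫ (1−t)^{−λ/2} ∂^k[(1−t²)^{k+(d−3)/2}] dt` for `k ≥ 1`,
and consequently (via the Rodrigues formula
`(1−t²)^{(d−3)/2} P_{k,d}(t) = (−1)^k R_{k,d} ∂^k (1−t²)^{k+(d−3)/2}` with
`R_{k,d} = Γ((d−1)/2)/(2^k Γ(k+(d−1)/2))`) strict negativity of `I_k(d,λ)`. -/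
theorem statement9 (d : ℕ) (hd : 3 ≤ d) (lam : ℝ) (hlam₁ : -2 < lam) (hlam₂ : lam < 0)
    (k : ℕ) (hk : 1 ≤ k) :
    ((-1 : ℝ) ^ k *
        ∫ t in (-1 : ℝ)..1, (1 - t) ^ (-lam / 2) *
          iteratedDeriv k (fun s : ℝ => (1 - s ^ 2) ^ ((k : ℝ) + ((d : ℝ) - 3) / 2)) t) < 0 ∧
      sphereArea (d - 1) *
        ((-1 : ℝ) ^ k *
          (Real.Gamma (((d : ℝ) - 1) / 2) / (2 ^ k * Real.Gamma ((k : ℝ) + ((d : ℝ) - 1) / 2)) *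
            ∫ t in (-1 : ℝ)..1, (1 - t) ^ (-lam / 2) *
              iteratedDeriv k (fun s : ℝ => (1 - s ^ 2) ^ ((k : ℝ) + ((d : ℝ) - 3) / 2)) t)) < 0 := by
  have hd' : (3 : ℝ) ≤ d := by exact_mod_cast hd
  have hneg := neg_one_pow_mul_integral_one_sub_rpow_mul_iteratedDeriv_neg
    (α := -lam / 2) (k := k) (β := k + ((d : ℝ) - 3) / 2) (by linarith) (by linarith) (by omega)
    (by linarith)
  refine ⟨hneg, ?_⟩
  have hR : 0 < Real.Gamma (((d : ℝ) - 1) / 2) /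
      (2 ^ k * Real.Gamma ((k : ℝ) + ((d : ℝ) - 1) / 2)) :=
    div_pos (Real.Gamma_pos_of_pos (by linarith)) (mul_pos (by positivity)
      (Real.Gamma_pos_of_pos (by linarith [k.cast_nonneg (α := ℝ)])))
  rw [mul_left_comm ((-1 : ℝ) ^ k)]
  exact mul_neg_of_pos_of_neg (sphereArea_pos (by omega)) (mul_neg_of_pos_of_neg hR hneg)
end

section
/- Let A ∈ (−1, 0]. If ∫_{−1}^{1} t(1−t²)/(1+At)⁵ dt = 0, then A = 0. Equivalently, for every A ∈ (−1, 0) one has ∫_{−1}^{1} t(1−t²)/(1+At)⁵ dt ≠ 0. -/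
open MeasureTheory Set

lemma stmt14_denom_pos {A t : ℝ} (hA1 : -1 < A) (hA0 : A ≤ 0) (ht : t ≤ 1) :
    0 < 1 + A * t := by nlinarith

lemma stmt14_aux (A : ℝ) (hA : A ∈ Set.Ioo (-1 : ℝ) 0) :
    0 < ∫ t in (-1 : ℝ)..1, t * (1 - t ^ 2) / (1 + A * t) ^ 5 := by
  obtain ⟨hA1, hA0⟩ := hA
  set f : ℝ → ℝ := fun t => t * (1 - t ^ 2) / (1 + A * t) ^ 5 with hf
  have hcont : ContinuousOn f (Set.Icc (-1 : ℝ) 1) := by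
    apply ContinuousOn.div (by fun_prop) (by fun_prop)
    intro t ht
    have := stmt14_denom_pos hA1 hA0.le ht.2
    positivity
  have hint : ∀ a b : ℝ, a ∈ Set.Icc (-1 : ℝ) 1 → b ∈ Set.Icc (-1 : ℝ) 1 →
      IntervalIntegrable f volume a b := fun a b ha hb =>
    (hcont.mono (Set.uIcc_subset_Icc ha hb)).intervalIntegrable
  have h01 : IntervalIntegrable f volume 0 1 :=
    hint 0 1 (by norm_num) (by norm_num)
  have hneg : IntervalIntegrable (fun t => f (-t)) volume 0 1 := by
    have hc2 : ContinuousOn (fun t => f (-t)) (Set.Icc (0 : ℝ) 1) := by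
      apply hcont.comp (continuousOn_neg)
      intro x hx
      constructor <;> [linarith [hx.2]; linarith [hx.1]]
    exact (hc2.mono (by rw [Set.uIcc_of_le] <;> norm_num)).intervalIntegrable
  have hsplit : (∫ t in (-1 : ℝ)..1, f t)
      = (∫ t in (0 : ℝ)..1, f (-t)) + ∫ t in (0 : ℝ)..1, f t := by
    rw [intervalIntegral.integral_comp_neg f]
    norm_num
    exact (intervalIntegral.integral_add_adjacent_intervals
      (hint (-1) 0 (by norm_num) (by norm_num)) h01).symm
  rw [hsplit, ← intervalIntegral.integral_add hneg h01]
  apply intervalIntegral.intervalIntegral_pos_of_pos_on (hneg.add h01)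
  · intro t ht
    obtain ⟨ht0, ht1⟩ := ht
    have hp : 0 < 1 + A * t := stmt14_denom_pos hA1 hA0.le ht1.le
    have hq : 0 < 1 - A * t := by nlinarith
    have hpq : (1 + A * t) ^ 5 < (1 - A * t) ^ 5 := by
      apply pow_lt_pow_left₀ _ hp.le (by norm_num)
      nlinarith
    have hc : 0 < t * (1 - t ^ 2) := by nlinarith
    have key : t * (1 - t ^ 2) / (1 - A * t) ^ 5 < t * (1 - t ^ 2) / (1 + A * t) ^ 5 :=
      div_lt_div_of_pos_left hc (by positivity) hpq
    have hrw : f (-t) = -(t * (1 - t ^ 2) / (1 - A * t) ^ 5) := by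
      simp only [hf]
      rw [show (1 + A * -t) = 1 - A * t by ring]
      ring
    simp only [hrw, hf]
    linarith
  · norm_num

/-- for `A ∈ (−1,0]`, if `∫_{−1}^{1} t(1−t²)/(1+At)⁵ dt = 0` then `A = 0`;
equivalently, the integral is nonzero for every `A ∈ (−1,0)`. -/
theorem statement14 :
    (∀ A : ℝ, A ∈ Set.Ioc (-1 : ℝ) 0 →
        (∫ t in (-1 : ℝ)..1, t * (1 - t ^ 2) / (1 + A * t) ^ 5) = 0 → A = 0) ∧
      (∀ A : ℝ, A ∈ Set.Ioo (-1 : ℝ) 0 →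
        (∫ t in (-1 : ℝ)..1, t * (1 - t ^ 2) / (1 + A * t) ^ 5) ≠ 0) := by
  constructor
  · intro A hA h0
    rcases eq_or_lt_of_le hA.2 with h | h
    · exact h
    · exact absurd h0 (ne_of_gt (stmt14_aux A ⟨hA.1, h⟩))
  · intro A hA
    exact ne_of_gt (stmt14_aux A hA)
end
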